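/- Let Θ be the characteristics of the kinetic Kuramoto model for identical oscillators with initial measure ρ₀, and suppose the solution is not stationary. Then z(t) ≠ 0 for all t > 0, R(t) converges to some R* ∈ (0,1], and φ(t) converges as t → ∞: there exists φ* ∈ ℝ such that z(t)/|z(t)| → e^{iφ*}. -/

import Mathlib

/-!
`‖z‖²` is nondecreasing, with derivative `2 ∫ v² dρ₀` where `v = ∂ₜΘ`, so `∫₀^∞ ∫ v² dρ₀ dt ≤ 1/2`.
If `z` vanished at some `t > 0` it would vanish at all times (by monotonicity backwards and
Grönwall forwards) and nothing would move. Otherwise `‖z‖` stays away from `0` after `t = 1`.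
For `ρ₀`-a.e. oscillator the velocity is square integrable in time and Lipschitz, hence tends to
`0`; since `|sin (Θ θ - Θ θ')| ‖z‖ ≤ |v θ| + |v θ'|`, phase differences lock modulo `π` and
converge. Characteristics are increasing and commute with `2π`-shifts, so relative displacements
stay within `2π`; as the mean displacement `∫ (Θ t θ - θ) dρ₀` is conserved, dominated convergence
makes every characteristic converge, and with them `z`, whose limit has norm at least `‖z 1‖`.
-/

open MeasureTheory Filter Real Set Topology
open scoped NNReal Complex ComplexConjugate

theorem lipschitzWith_cexp_I_mul : LipschitzWith 1 fun x : ℝ => cexp (Complex.I * x) := by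
  refine LipschitzWith.of_dist_le_mul fun x y => ?_
  have : cexp (Complex.I * x) - cexp (Complex.I * y) =
      cexp (Complex.I * y) * (cexp (Complex.I * ↑(x - y)) - 1) := by
    rw [mul_sub, ← Complex.exp_add]; push_cast; ring_nf
  rw [Complex.dist_eq, this, norm_mul, Complex.norm_exp_I_mul_ofReal, one_mul, NNReal.coe_one,
    one_mul, Real.dist_eq]
  exact Real.norm_exp_I_mul_ofReal_sub_one_le

theorem exists_tendsto_of_tendsto_sin {g : ℝ → ℝ} {a : ℝ} (hg : ContinuousOn g (Ici a))
    (hsin : Tendsto (fun t => sin (g t)) atTop (𝓝 0)) : ∃ L, Tendsto g atTop (𝓝 L) := by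
  obtain ⟨T, hT⟩ := ((hsin.eventually (Metric.ball_mem_nhds 0 one_pos)).and
    (eventually_ge_atTop a)).exists_forall_of_atTop
  have hsinT : ∀ t ≥ T, |sin (g t)| < 1 := fun t ht => by simpa using (hT t ht).1
  set k : ℤ := round (g T / π)
  set h : ℝ → ℝ := fun t => g t - k * π
  have habs_sin : ∀ t, |sin (h t)| = |sin (g t)| := fun t => by
    simp [h, sin_sub_int_mul_pi, abs_mul]
  have hhT : |h T| ≤ π / 2 := by
    have hk : h T = (g T / π - k) * π := by field_simp [h]; ring
    rw [hk, abs_mul, abs_of_pos pi_pos]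
    nlinarith [abs_sub_round (g T / π), pi_pos]
  -- `|sin ∘ h| < 1` after `T`, so `h` cannot cross `±π/2`
  have htrap : ∀ t ≥ T, |h t| < π / 2 := by
    intro t ht
    by_contra! hcon
    have hcont : ContinuousOn (fun s => |h s|) (Icc T t) :=
      ((hg.mono fun s hs => (hT T le_rfl).2.trans hs.1).sub continuousOn_const).abs
    obtain ⟨s, hs, hs_eq⟩ := intermediate_value_Icc ht hcont ⟨hhT, hcon⟩
    have : |sin (h s)| = 1 := by
      rcases _root_.abs_eq (by positivity) |>.mp hs_eq with h' | h' <;> simp [h']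
    linarith [hsinT s hs.1, habs_sin s]
  have harcsin : ∀ᶠ t in atTop, arcsin (sin (h t)) = h t := by
    filter_upwards [eventually_ge_atTop T] with t ht
    obtain ⟨h₁, h₂⟩ := abs_lt.mp (htrap t ht)
    exact arcsin_sin h₁.le h₂.le
  have hsin_h : Tendsto (fun t => sin (h t)) atTop (𝓝 0) := by
    rw [tendsto_zero_iff_abs_tendsto_zero] at hsin ⊢
    exact hsin.congr fun t => (habs_sin t).symm
  have : Tendsto h atTop (𝓝 0) := by
    simpa using ((continuous_arcsin.tendsto 0).comp hsin_h).congr' harcsin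
  exact ⟨k * π, by simpa [h] using this.add_const (k * π)⟩

theorem tendsto_intervalIntegral_add_atTop {f : ℝ → ℝ} {a : ℝ}
    (hf : IntegrableOn f (Ioi a)) (δ : ℝ) :
    Tendsto (fun t => ∫ s in t..t + δ, f s) atTop (𝓝 0) := by
  have hint : ∀ {u}, a ≤ u → IntervalIntegrable f volume a u := fun hu =>
    (intervalIntegrable_iff_integrableOn_Ioc_of_le hu).2 (hf.mono_set Ioc_subset_Ioi_self)
  have hF := intervalIntegral_tendsto_integral_Ioi a hf tendsto_id
  have := (hF.comp (tendsto_atTop_add_const_right _ δ tendsto_id)).sub hF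
  rw [sub_self] at this
  refine this.congr' ?_
  filter_upwards [eventually_ge_atTop a, eventually_ge_atTop (a - δ)] with t ht htδ
  dsimp only [Function.comp, id]
  exact intervalIntegral.integral_interval_sub_left (hint (by linarith)) (hint ht)

theorem tendsto_zero_of_lipschitzOnWith_of_integrableOn_sq {g : ℝ → ℝ} {K : ℝ≥0} {a : ℝ}
    (hg : LipschitzOnWith K g (Ici a)) (hint : IntegrableOn (fun t => g t ^ 2) (Ioi a)) :
    Tendsto g atTop (𝓝 0) := by
  rw [Metric.tendsto_atTop]
  intro ε hε
  set δ : ℝ := ε / (2 * (K + 1))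
  have hδ : 0 < δ := by positivity
  obtain ⟨N, hN⟩ := (((tendsto_intervalIntegral_add_atTop hint δ).eventually
    (gt_mem_nhds (by positivity : 0 < δ * (ε / 2) ^ 2))).and
    (eventually_ge_atTop a)).exists_forall_of_atTop
  refine ⟨N, fun t ht => ?_⟩
  obtain ⟨hsmall, hta⟩ := hN t ht
  by_contra! hbig
  rw [Real.dist_0_eq_abs] at hbig
  have hlower : ∀ s ∈ Icc t (t + δ), (ε / 2) ^ 2 ≤ g s ^ 2 := by
    intro s hs
    have hdist := hg.dist_le_mul s (hta.trans hs.1) t hta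
    rw [Real.dist_eq, Real.dist_eq, abs_of_nonneg (sub_nonneg.2 hs.1)] at hdist
    have hKδ : (K : ℝ) * (s - t) ≤ ε / 2 := by
      calc (K : ℝ) * (s - t) ≤ (K + 1) * δ :=
            mul_le_mul (by linarith) (by linarith [hs.2]) (by linarith [hs.1]) (by positivity)
        _ = ε / 2 := by simp only [δ]; field_simp
    have : ε / 2 ≤ |g s| := by
      linarith [abs_sub_abs_le_abs_sub (g t) (g s), abs_sub_comm (g s) (g t)]
    rw [← sq_abs (g s)]
    gcongr
  have hwindow : IntervalIntegrable (fun s => g s ^ 2) volume t (t + δ) :=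
    (intervalIntegrable_iff_integrableOn_Ioc_of_le (by linarith)).2
      (hint.mono_set fun s hs => hta.trans_lt hs.1)
  have : δ * (ε / 2) ^ 2 ≤ ∫ s in t..t + δ, g s ^ 2 := by
    calc δ * (ε / 2) ^ 2 = ∫ _ in t..t + δ, (ε / 2) ^ 2 := by simp
      _ ≤ _ := intervalIntegral.integral_mono_on (by linarith) intervalIntegrable_const
          hwindow hlower
  linarith

theorem MonotoneOn.exists_tendsto_atTop_of_le {f : ℝ → ℝ} {a C : ℝ} (hf : MonotoneOn f (Ici a))
    (hC : ∀ t, f t ≤ C) : ∃ l, Tendsto f atTop (𝓝 l) := by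
  have hmono : Monotone fun t => f (max t a) := fun s t hst =>
    hf (le_max_right s a) (le_max_right t a) (max_le_max hst le_rfl)
  refine ⟨_, (tendsto_atTop_ciSup hmono ⟨C, ?_⟩).congr' ?_⟩
  · rintro _ ⟨t, rfl⟩; exact hC _
  · filter_upwards [eventually_ge_atTop a] with t ht
    rw [max_eq_left ht]

-- For `u = R e^{iφ}` this is `R sin (φ - x)`, the mean-field velocity at phase `x`.
noncomputable def kuramotoField (u : ℂ) (x : ℝ) : ℝ :=
  -(cexp (Complex.I * x) * conj u).im

namespace kuramotoField

theorem eq_cos_mul_sub_sin_mul (u : ℂ) (x : ℝ) :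
    kuramotoField u x = cos x * u.im - sin x * u.re := by
  rw [kuramotoField, mul_comm Complex.I]
  simp only [Complex.mul_im, Complex.exp_ofReal_mul_I_re, Complex.exp_ofReal_mul_I_im,
    Complex.conj_re, Complex.conj_im]
  ring

@[simp] theorem zero_left (x : ℝ) : kuramotoField 0 x = 0 := by simp [kuramotoField]

theorem sub_left (u w : ℂ) (x : ℝ) :
    kuramotoField (u - w) x = kuramotoField u x - kuramotoField w x := by
  simp only [eq_cos_mul_sub_sin_mul, Complex.sub_im, Complex.sub_re]; ring

theorem abs_le (u : ℂ) (x : ℝ) : |kuramotoField u x| ≤ ‖u‖ := by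
  rw [kuramotoField, abs_neg]
  refine (Complex.abs_im_le_norm _).trans_eq ?_
  rw [norm_mul, Complex.norm_exp_I_mul_ofReal, Complex.norm_conj, one_mul]

theorem lipschitzWith (u : ℂ) : LipschitzWith ‖u‖₊ (kuramotoField u) := by
  refine LipschitzWith.of_dist_le_mul fun x y => ?_
  have : kuramotoField u x - kuramotoField u y =
      -((cexp (Complex.I * x) - cexp (Complex.I * y)) * conj u).im := by
    simp only [kuramotoField, sub_mul, Complex.sub_im]; ring
  rw [Real.dist_eq, this, abs_neg, coe_nnnorm, mul_comm]
  refine (Complex.abs_im_le_norm _).trans ?_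
  rw [norm_mul, Complex.norm_conj, ← Complex.dist_eq]
  gcongr
  simpa using lipschitzWith_cexp_I_mul.dist_le_mul x y

@[fun_prop] theorem continuous (u : ℂ) : Continuous (kuramotoField u) :=
  (lipschitzWith u).continuous

theorem periodic (u : ℂ) : Function.Periodic (kuramotoField u) (2 * π) := fun x => by
  simp only [eq_cos_mul_sub_sin_mul, cos_add_two_pi, sin_add_two_pi]

theorem abs_sin_sub_mul_norm_le (u : ℂ) (x y : ℝ) :
    |sin (x - y)| * ‖u‖ ≤ |kuramotoField u x| + |kuramotoField u y| := by
  rcases (norm_nonneg u).eq_or_lt with hu | hu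
  · rw [← hu, mul_zero]; positivity
  have hG : ∀ w : ℝ, |cos w * u.re + sin w * u.im| ≤ ‖u‖ := fun w => by
    have := (Complex.abs_re_le_norm (cexp (Complex.I * w) * conj u))
    rwa [norm_mul, Complex.norm_exp_I_mul_ofReal, Complex.norm_conj, one_mul, mul_comm Complex.I,
      Complex.mul_re, Complex.exp_ofReal_mul_I_re, Complex.exp_ofReal_mul_I_im, Complex.conj_re,
      Complex.conj_im, mul_neg, sub_neg_eq_add] at this
  have hid : sin (x - y) * ‖u‖ ^ 2 =
      kuramotoField u y * (cos x * u.re + sin x * u.im) -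
        kuramotoField u x * (cos y * u.re + sin y * u.im) := by
    rw [← Complex.normSq_eq_norm_sq]
    simp only [eq_cos_mul_sub_sin_mul, Complex.normSq_apply, sin_sub]; ring
  refine le_of_mul_le_mul_right ?_ hu
  rw [mul_assoc, ← sq, ← abs_of_nonneg (sq_nonneg ‖u‖), ← abs_mul, hid]
  refine (abs_sub _ _).trans ?_
  rw [abs_mul, abs_mul]
  nlinarith [hG x, hG y, abs_nonneg (kuramotoField u x), abs_nonneg (kuramotoField u y)]

theorem norm_cexp_mul_I_mul (u : ℂ) (x : ℝ) :
    ‖cexp (Complex.I * x) * (Complex.I * kuramotoField u x)‖ = |kuramotoField u x| := by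
  simp [Complex.norm_exp_I_mul_ofReal]

end kuramotoField

structure IsKuramotoCharacteristics (ρ₀ : Measure ℝ) (Θ : ℝ → ℝ → ℝ) (z : ℝ → ℂ) : Prop where
  orderParameter_eq : ∀ t, z t = ∫ θ, cexp (Complex.I * Θ t θ) ∂ρ₀
  initial : ∀ θ, Θ 0 θ = θ
  hasDerivAt : ∀ θ, ∀ t ≥ (0 : ℝ), HasDerivAt (fun s => Θ s θ) (kuramotoField (z t) (Θ t θ)) t

namespace IsKuramotoCharacteristics

variable {ρ₀ : Measure ℝ} {Θ : ℝ → ℝ → ℝ} {z : ℝ → ℂ} {t : ℝ}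

theorem continuousOn_time (h : IsKuramotoCharacteristics ρ₀ Θ z) (θ : ℝ) :
    ContinuousOn (fun s => Θ s θ) (Ici 0) :=
  fun s hs => (h.hasDerivAt θ s hs).continuousAt.continuousWithinAt

theorem apply_eq_self_of_orderParameter_eq_zero (h : IsKuramotoCharacteristics ρ₀ Θ z)
    (hz : ∀ s ≥ 0, z s = 0) (ht : 0 ≤ t) (θ : ℝ) : Θ t θ = θ := by
  have := constant_of_has_deriv_right_zero ((h.continuousOn_time θ).mono Icc_subset_Ici_self)
    (fun s hs => by simpa [hz s hs.1] using (h.hasDerivAt θ s hs.1).hasDerivWithinAt) t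
    ⟨ht, le_rfl⟩
  rwa [h.initial] at this

variable [IsProbabilityMeasure ρ₀]

theorem norm_orderParameter_le_one (h : IsKuramotoCharacteristics ρ₀ Θ z) (t : ℝ) : ‖z t‖ ≤ 1 := by
  rw [h.orderParameter_eq]
  simpa using norm_integral_le_of_norm_le_const (μ := ρ₀)
    (ae_of_all _ fun θ => (Complex.norm_exp_I_mul_ofReal (Θ t θ)).le)

theorem abs_field_le_one (h : IsKuramotoCharacteristics ρ₀ Θ z) (t x : ℝ) :
    |kuramotoField (z t) x| ≤ 1 :=
  (kuramotoField.abs_le _ _).trans (h.norm_orderParameter_le_one t)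

theorem lipschitzWith_field (h : IsKuramotoCharacteristics ρ₀ Θ z) (t : ℝ) :
    LipschitzWith 1 (kuramotoField (z t)) :=
  (kuramotoField.lipschitzWith _).weaken
    (by simpa [← NNReal.coe_le_coe] using h.norm_orderParameter_le_one t)

theorem lipschitzOnWith_time (h : IsKuramotoCharacteristics ρ₀ Θ z) (θ : ℝ) :
    LipschitzOnWith 1 (fun s => Θ s θ) (Ici 0) :=
  (convex_Ici 0).lipschitzOnWith_of_nnnorm_hasDerivWithin_le
    (fun s hs => (h.hasDerivAt θ s hs).hasDerivWithinAt)
    (fun s _ => by simpa [← NNReal.coe_le_coe] using h.abs_field_le_one s _)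

theorem dist_le_mul_exp (h : IsKuramotoCharacteristics ρ₀ Θ z) (ht : 0 ≤ t) (θ θ' : ℝ) :
    dist (Θ t θ) (Θ t θ') ≤ dist θ θ' * exp t := by
  have := dist_le_of_trajectories_ODE (a := 0) (b := t) h.lipschitzWith_field
    ((h.continuousOn_time θ).mono Icc_subset_Ici_self)
    (fun s hs => (h.hasDerivAt θ s hs.1).hasDerivWithinAt)
    ((h.continuousOn_time θ').mono Icc_subset_Ici_self)
    (fun s hs => (h.hasDerivAt θ' s hs.1).hasDerivWithinAt) le_rfl t ⟨ht, le_rfl⟩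
  simpa [h.initial] using this

theorem continuous (h : IsKuramotoCharacteristics ρ₀ Θ z) (ht : 0 ≤ t) : Continuous (Θ t) :=
  (LipschitzWith.of_dist_le_mul (K := ⟨exp t, (exp_pos t).le⟩) fun θ θ' =>
    (h.dist_le_mul_exp ht θ θ').trans_eq (mul_comm _ _)).continuous

theorem periodic_sub_self (h : IsKuramotoCharacteristics ρ₀ Θ z) (ht : 0 ≤ t) :
    Function.Periodic (fun θ => Θ t θ - θ) (2 * π) := fun θ => by
  have := ODE_solution_unique_of_mem_Icc_right (s := fun _ => univ) (a := 0) (b := t)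
    (fun s _ => (h.lipschitzWith_field s).lipschitzOnWith)
    ((h.continuousOn_time (θ + 2 * π)).mono Icc_subset_Ici_self)
    (fun s hs => (h.hasDerivAt _ s hs.1).hasDerivWithinAt) (fun _ _ => trivial)
    (g := fun s => Θ s θ + 2 * π)
    (((h.continuousOn_time θ).add continuousOn_const).mono Icc_subset_Ici_self)
    (fun s hs => by
      rw [(kuramotoField.periodic _) (Θ s θ)]
      exact ((h.hasDerivAt θ s hs.1).add_const _).hasDerivWithinAt)
    (fun _ _ => trivial) (by simp [h.initial]) ⟨ht, le_rfl⟩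
  simp only [this]; ring

theorem injective (h : IsKuramotoCharacteristics ρ₀ Θ z) (ht : 0 ≤ t) :
    Function.Injective (Θ t) := fun θ θ' heq => by
  have := ODE_solution_unique_of_mem_Icc_left (s := fun _ => univ) (a := 0) (b := t)
    (fun s _ => (h.lipschitzWith_field s).lipschitzOnWith)
    ((h.continuousOn_time θ).mono Icc_subset_Ici_self)
    (fun s hs => (h.hasDerivAt θ s hs.1.le).hasDerivWithinAt) (fun _ _ => trivial)
    ((h.continuousOn_time θ').mono Icc_subset_Ici_self)
    (fun s hs => (h.hasDerivAt θ' s hs.1.le).hasDerivWithinAt) (fun _ _ => trivial) heq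
    ⟨le_rfl, ht⟩
  simpa [h.initial] using this

theorem strictMono (h : IsKuramotoCharacteristics ρ₀ Θ z) (ht : 0 ≤ t) : StrictMono (Θ t) := by
  refine ((h.continuous ht).strictMono_of_inj (h.injective ht)).resolve_right fun hanti => ?_
  have h2π := h.periodic_sub_self ht 0
  have := hanti (show (0 : ℝ) < 0 + 2 * π by positivity)
  linarith [pi_pos]

theorem abs_sub_self_sub_le (h : IsKuramotoCharacteristics ρ₀ Θ z) (ht : 0 ≤ t) (θ₀ θ : ℝ) :
    |(Θ t θ - θ) - (Θ t θ₀ - θ₀)| ≤ 2 * π := by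
  obtain ⟨θ', ⟨hθ₀, hθ'⟩, heq⟩ := (h.periodic_sub_self ht).exists_mem_Ico (by positivity) θ θ₀
  have hlow := (h.strictMono ht).monotone hθ₀
  have hup := (h.strictMono ht).monotone hθ'.le
  have hper := h.periodic_sub_self ht θ₀
  rw [heq, abs_le]
  constructor <;> linarith

theorem integrable_cexp (h : IsKuramotoCharacteristics ρ₀ Θ z) (ht : 0 ≤ t) :
    Integrable (fun θ => cexp (Complex.I * Θ t θ)) ρ₀ :=
  have := h.continuous ht
  Integrable.of_bound (by fun_prop : Continuous _).aestronglyMeasurable 1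
    (ae_of_all _ fun θ => (Complex.norm_exp_I_mul_ofReal _).le)

theorem lipschitzOnWith_orderParameter (h : IsKuramotoCharacteristics ρ₀ Θ z) :
    LipschitzOnWith 1 z (Ici 0) := by
  refine LipschitzOnWith.of_dist_le_mul fun s hs r hr => ?_
  rw [dist_eq_norm, h.orderParameter_eq, h.orderParameter_eq,
    ← integral_sub (h.integrable_cexp hs) (h.integrable_cexp hr)]
  refine (norm_integral_le_of_norm_le_const (C := dist s r) (ae_of_all _ fun θ => ?_)).trans
    (by simp)
  rw [← dist_eq_norm]
  refine (lipschitzWith_cexp_I_mul.dist_le_mul _ _).trans ?_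
  simpa using (h.lipschitzOnWith_time θ).dist_le_mul s hs r hr

theorem hasDerivAt_orderParameter (h : IsKuramotoCharacteristics ρ₀ Θ z) (ht : 0 < t) :
    HasDerivAt z
      (∫ θ, cexp (Complex.I * Θ t θ) * (Complex.I * kuramotoField (z t) (Θ t θ)) ∂ρ₀) t := by
  have hnonneg : ∀ s ∈ Metric.ball t t, 0 ≤ s := fun s hs => by
    rw [Real.ball_eq_Ioo, sub_self] at hs; exact hs.1.le
  have := h.continuous ht.le
  refine (hasDerivAt_integral_of_dominated_loc_of_deriv_le (bound := fun _ => 1)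
    (F' := fun s θ => cexp (Complex.I * Θ s θ) * (Complex.I * kuramotoField (z s) (Θ s θ)))
    (Metric.ball_mem_nhds t ht)
    ((eventually_gt_nhds ht).mono fun s hs => (h.integrable_cexp hs.le).aestronglyMeasurable)
    (h.integrable_cexp ht.le) (by fun_prop : Continuous _).aestronglyMeasurable
    (ae_of_all _ fun θ s _ => ?_) (integrable_const 1)
    (ae_of_all _ fun θ s hs => ?_)).2.congr_of_eventuallyEq
    (Eventually.of_forall h.orderParameter_eq)
  · rw [kuramotoField.norm_cexp_mul_I_mul]; exact h.abs_field_le_one s _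
  · exact ((h.hasDerivAt θ s (hnonneg s hs)).ofReal_comp.const_mul Complex.I).cexp

theorem hasDerivAt_norm_sq (h : IsKuramotoCharacteristics ρ₀ Θ z) (ht : 0 < t) :
    HasDerivAt (fun s => ‖z s‖ ^ 2) (2 * ∫ θ, kuramotoField (z t) (Θ t θ) ^ 2 ∂ρ₀) t := by
  have := h.continuous ht.le
  have hint : Integrable (fun θ => cexp (Complex.I * Θ t θ) *
      (Complex.I * kuramotoField (z t) (Θ t θ)) * conj (z t)) ρ₀ :=
    Integrable.of_bound (by fun_prop : Continuous _).aestronglyMeasurable 1 (ae_of_all _ fun θ => by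
      rw [norm_mul, kuramotoField.norm_cexp_mul_I_mul, Complex.norm_conj]
      exact mul_le_one₀ (h.abs_field_le_one t _) (norm_nonneg _) (h.norm_orderParameter_le_one t))
  convert (h.hasDerivAt_orderParameter ht).norm_sq using 2
  rw [Complex.inner, ← integral_mul_const, ← RCLike.re_to_complex, ← integral_re hint]
  congr 1 with θ
  simp only [RCLike.re_to_complex, kuramotoField, Complex.mul_re, Complex.mul_im, Complex.I_re,
    Complex.I_im, Complex.ofReal_re, Complex.ofReal_im]
  ring

theorem monotoneOn_norm_sq (h : IsKuramotoCharacteristics ρ₀ Θ z) :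
    MonotoneOn (fun t => ‖z t‖ ^ 2) (Ici 0) := by
  refine monotoneOn_of_deriv_nonneg (convex_Ici 0)
    (h.lipschitzOnWith_orderParameter.continuousOn.norm.pow 2) (fun t ht => ?_) (fun t ht => ?_)
  all_goals rw [interior_Ici] at ht
  · exact (h.hasDerivAt_norm_sq ht).differentiableAt.differentiableWithinAt
  · rw [(h.hasDerivAt_norm_sq ht).deriv]
    exact mul_nonneg zero_le_two (integral_nonneg fun θ => sq_nonneg _)

theorem monotoneOn_norm (h : IsKuramotoCharacteristics ρ₀ Θ z) :
    MonotoneOn (fun t => ‖z t‖) (Ici 0) := fun _ hs _ hr hsr =>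
  (pow_le_pow_iff_left₀ (norm_nonneg _) (norm_nonneg _) two_ne_zero).1
    (h.monotoneOn_norm_sq hs hr hsr)

theorem eq_zero_of_orderParameter_eq_zero (h : IsKuramotoCharacteristics ρ₀ Θ z) (ht : 0 < t)
    (hzt : z t = 0) {s : ℝ} (hs : 0 ≤ s) : z s = 0 := by
  rcases le_total s t with hst | hts
  · simpa [hzt] using h.monotoneOn_norm hs ht.le hst
  -- forwards in time, `‖z'‖ ≤ ‖z‖`, so Grönwall keeps `z` at zero
  refine eq_zero_of_abs_deriv_le_mul_abs_self_of_eq_zero_right (K := 1)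
    (h.lipschitzOnWith_orderParameter.continuousOn.mono fun r hr => ht.le.trans hr.1)
    (fun r hr => (h.hasDerivAt_orderParameter (ht.trans_le hr.1)).hasDerivWithinAt) hzt
    (fun r _ => ?_) s ⟨hts, le_rfl⟩
  rw [one_mul]
  simpa using norm_integral_le_of_norm_le_const (μ := ρ₀) (C := ‖z r‖) (ae_of_all _ fun θ => by
    rw [kuramotoField.norm_cexp_mul_I_mul]; exact kuramotoField.abs_le _ _)

theorem orderParameter_ne_zero (h : IsKuramotoCharacteristics ρ₀ Θ z)
    (hmoving : ¬ ∀ t ≥ 0, Measure.map (Θ t) ρ₀ = ρ₀) (ht : 0 < t) : z t ≠ 0 := fun hzt =>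
  hmoving fun s hs => by
    rw [show Θ s = id from funext <| h.apply_eq_self_of_orderParameter_eq_zero
      (fun r hr => h.eq_zero_of_orderParameter_eq_zero ht hzt hr) hs, Measure.map_id]

theorem integral_field_eq_zero (h : IsKuramotoCharacteristics ρ₀ Θ z) (ht : 0 ≤ t) :
    ∫ θ, kuramotoField (z t) (Θ t θ) ∂ρ₀ = 0 := by
  have := integral_im ((h.integrable_cexp ht).mul_const (conj (z t)))
  simp only [RCLike.im_to_complex] at this
  simp only [kuramotoField, integral_neg, this, integral_mul_const, ← h.orderParameter_eq,
    Complex.mul_conj, Complex.ofReal_im, neg_zero]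

theorem integrableOn_integral_sq_field (h : IsKuramotoCharacteristics ρ₀ Θ z) :
    IntegrableOn (fun t => ∫ θ, kuramotoField (z t) (Θ t θ) ^ 2 ∂ρ₀) (Ioi 0) := by
  obtain ⟨l, hl⟩ := h.monotoneOn_norm_sq.exists_tendsto_atTop_of_le (C := 1) fun t =>
    pow_le_one₀ (norm_nonneg _) (h.norm_orderParameter_le_one t)
  have := integrableOn_Ioi_deriv_of_nonneg
    (h.lipschitzOnWith_orderParameter.continuousOn.norm.pow 2 0 (mem_Ici.2 le_rfl))
    (fun t ht => h.hasDerivAt_norm_sq ht)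
    (fun t _ => mul_nonneg zero_le_two (integral_nonneg fun θ => sq_nonneg _)) hl
  have := this.const_mul 2⁻¹
  simp only [← mul_assoc, inv_mul_cancel₀ (two_ne_zero' ℝ), one_mul] at this
  exact this

theorem continuousOn_uncurry (h : IsKuramotoCharacteristics ρ₀ Θ z) :
    ContinuousOn (Function.uncurry Θ) (Ici 0 ×ˢ univ) :=
  continuousOn_prod_of_continuousOn_lipschitzOnWith _ 1
    (fun _ ht => (h.continuous ht).continuousOn) (fun θ _ => h.lipschitzOnWith_time θ)

theorem ae_integrableOn_sq_field (h : IsKuramotoCharacteristics ρ₀ Θ z) :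
    ∀ᵐ θ ∂ρ₀, IntegrableOn (fun t => kuramotoField (z t) (Θ t θ) ^ 2) (Ioi 0) := by
  set f : ℝ × ℝ → ℝ := fun p => kuramotoField (z p.1) (Θ p.1 p.2) ^ 2
  have hcont : ContinuousOn f (Ici 0 ×ˢ univ) := by
    have hz : ContinuousOn (fun p : ℝ × ℝ => z p.1) (Ici 0 ×ˢ univ) :=
      h.lipschitzOnWith_orderParameter.continuousOn.comp continuous_fst.continuousOn
        fun p hp => hp.1
    have hΘ := h.continuousOn_uncurry
    simp only [f, kuramotoField.eq_cos_mul_sub_sin_mul]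
    exact (((continuous_cos.comp_continuousOn hΘ).mul
      (Complex.continuous_im.comp_continuousOn hz)).sub ((continuous_sin.comp_continuousOn hΘ).mul
      (Complex.continuous_re.comp_continuousOn hz))).pow 2
  have hmeas : AEStronglyMeasurable f ((volume.restrict (Ioi 0)).prod ρ₀) := by
    rw [Measure.restrict_prod_eq_prod_univ]
    exact (hcont.mono (prod_mono Ioi_subset_Ici_self subset_rfl)).aestronglyMeasurable
      (measurableSet_Ioi.prod MeasurableSet.univ)
  have hint : Integrable f ((volume.restrict (Ioi 0)).prod ρ₀) := by
    refine (integrable_prod_iff hmeas).2 ⟨(ae_restrict_mem measurableSet_Ioi).mono fun t ht => ?_,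
      h.integrableOn_integral_sq_field.congr_fun (fun t _ => ?_) measurableSet_Ioi⟩
    · have := h.continuous (le_of_lt ht)
      refine Integrable.of_bound
        (by fun_prop : Continuous fun θ => kuramotoField (z t) (Θ t θ) ^ 2).aestronglyMeasurable 1
        (ae_of_all _ fun θ => ?_)
      rw [norm_pow, Real.norm_eq_abs]
      exact pow_le_one₀ (abs_nonneg _) (h.abs_field_le_one t _)
    · simp only [f, Real.norm_eq_abs, abs_pow, sq_abs]
  exact hint.prod_left_ae

theorem lipschitzOnWith_field_time (h : IsKuramotoCharacteristics ρ₀ Θ z) (θ : ℝ) :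
    LipschitzOnWith 2 (fun t => kuramotoField (z t) (Θ t θ)) (Ici 0) := by
  refine LipschitzOnWith.of_dist_le_mul fun s hs r hr => ?_
  calc dist (kuramotoField (z s) (Θ s θ)) (kuramotoField (z r) (Θ r θ))
      ≤ dist (kuramotoField (z s) (Θ s θ)) (kuramotoField (z s) (Θ r θ)) +
          dist (kuramotoField (z s) (Θ r θ)) (kuramotoField (z r) (Θ r θ)) := dist_triangle _ _ _
    _ ≤ dist s r + dist s r := by
        gcongr
        · have h₁ := (h.lipschitzWith_field s).dist_le_mul (Θ s θ) (Θ r θ)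
          have h₂ := (h.lipschitzOnWith_time θ).dist_le_mul s hs r hr
          simp only [NNReal.coe_one, one_mul] at h₁ h₂
          exact h₁.trans h₂
        · rw [Real.dist_eq, ← kuramotoField.sub_left]
          refine (kuramotoField.abs_le _ _).trans ?_
          rw [← dist_eq_norm]
          simpa using h.lipschitzOnWith_orderParameter.dist_le_mul s hs r hr
    _ = (2 : ℝ≥0) * dist s r := by push_cast; ring

theorem ae_tendsto_field_zero (h : IsKuramotoCharacteristics ρ₀ Θ z) :
    ∀ᵐ θ ∂ρ₀, Tendsto (fun t => kuramotoField (z t) (Θ t θ)) atTop (𝓝 0) := by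
  filter_upwards [h.ae_integrableOn_sq_field] with θ hθ
  exact tendsto_zero_of_lipschitzOnWith_of_integrableOn_sq (h.lipschitzOnWith_field_time θ) hθ

theorem tendsto_sin_sub (h : IsKuramotoCharacteristics ρ₀ Θ z) {t₀ θ θ₀ : ℝ} (ht₀ : 0 ≤ t₀)
    (hzt₀ : z t₀ ≠ 0) (hθ : Tendsto (fun t => kuramotoField (z t) (Θ t θ)) atTop (𝓝 0))
    (hθ₀ : Tendsto (fun t => kuramotoField (z t) (Θ t θ₀)) atTop (𝓝 0)) :
    Tendsto (fun t => sin (Θ t θ - Θ t θ₀)) atTop (𝓝 0) := by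
  have hpos : 0 < ‖z t₀‖ := norm_pos_iff.2 hzt₀
  refine squeeze_zero_norm' ?_ (by simpa using (hθ.abs.add hθ₀.abs).div_const ‖z t₀‖)
  filter_upwards [eventually_ge_atTop t₀] with t ht
  rw [Real.norm_eq_abs, le_div_iff₀ hpos]
  calc |sin (Θ t θ - Θ t θ₀)| * ‖z t₀‖ ≤ |sin (Θ t θ - Θ t θ₀)| * ‖z t‖ := by
        gcongr; exact h.monotoneOn_norm ht₀ (ht₀.trans ht) ht
    _ ≤ _ := kuramotoField.abs_sin_sub_mul_norm_le _ _ _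

theorem integrable_sub_self (h : IsKuramotoCharacteristics ρ₀ Θ z) (ht : 0 ≤ t) :
    Integrable (fun θ => Θ t θ - θ) ρ₀ :=
  Integrable.of_bound ((h.continuous ht).sub continuous_id).aestronglyMeasurable t
    (ae_of_all _ fun θ => by
      simpa [h.initial, abs_of_nonneg ht, ← Real.dist_eq] using
        (h.lipschitzOnWith_time θ).dist_le_mul t ht 0 (mem_Ici.2 le_rfl))

theorem integral_sub_self_eq_zero (h : IsKuramotoCharacteristics ρ₀ Θ z) (ht : 0 ≤ t) :
    ∫ θ, (Θ t θ - θ) ∂ρ₀ = 0 := by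
  set M : ℝ → ℝ := fun s => ∫ θ, (Θ s θ - θ) ∂ρ₀
  have hcont : ContinuousOn M (Ici 0) := by
    refine (LipschitzOnWith.of_dist_le_mul (K := 1) fun s hs r hr => ?_).continuousOn
    rw [dist_eq_norm, ← integral_sub (h.integrable_sub_self hs) (h.integrable_sub_self hr)]
    refine (norm_integral_le_of_norm_le_const (C := dist s r) (ae_of_all _ fun θ => ?_)).trans
      (by simp)
    simpa [← Real.dist_eq] using (h.lipschitzOnWith_time θ).dist_le_mul s hs r hr
  have hderiv : ∀ s > 0, HasDerivAt M 0 s := fun s hs => by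
    have hnonneg : ∀ r ∈ Metric.ball s s, 0 ≤ r := fun r hr => by
      rw [Real.ball_eq_Ioo, sub_self] at hr; exact hr.1.le
    have := h.continuous hs.le
    rw [← h.integral_field_eq_zero hs.le]
    exact (hasDerivAt_integral_of_dominated_loc_of_deriv_le (bound := fun _ => 1)
      (F' := fun r θ => kuramotoField (z r) (Θ r θ)) (Metric.ball_mem_nhds s hs)
      ((eventually_gt_nhds hs).mono fun r hr => (h.integrable_sub_self hr.le).aestronglyMeasurable)
      (h.integrable_sub_self hs.le) (by fun_prop : Continuous _).aestronglyMeasurable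
      (ae_of_all _ fun θ r _ => h.abs_field_le_one r _) (integrable_const 1)
      (ae_of_all _ fun θ r hr => (h.hasDerivAt θ r (hnonneg r hr)).sub_const θ)).2
  rcases ht.eq_or_lt with rfl | ht
  · simp [h.initial]
  obtain ⟨c, hc, hslope⟩ := exists_hasDerivAt_eq_slope M (fun _ => 0) ht
    (hcont.mono Icc_subset_Ici_self) fun s hs => hderiv s hs.1
  have hM0 : M 0 = 0 := by simp [M, h.initial]
  rw [eq_comm, div_eq_zero_iff, sub_eq_zero, hM0] at hslope
  exact hslope.resolve_right (by linarith)

theorem exists_tendsto_of_ae_tendsto_sub (h : IsKuramotoCharacteristics ρ₀ Θ z) {θ₀ : ℝ}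
    (hdiff : ∀ᵐ θ ∂ρ₀, ∃ ℓ, Tendsto (fun t => Θ t θ - Θ t θ₀) atTop (𝓝 ℓ)) :
    ∃ c, Tendsto (fun t => Θ t θ₀) atTop (𝓝 c) := by
  set ℓ : ℝ → ℝ := fun θ => limUnder atTop fun t => Θ t θ - Θ t θ₀
  have hD : Tendsto (fun t => ∫ θ, ((Θ t θ - θ) - (Θ t θ₀ - θ₀)) ∂ρ₀) atTop
      (𝓝 (∫ θ, (ℓ θ - (θ - θ₀)) ∂ρ₀)) := by
    refine tendsto_integral_filter_of_dominated_convergence (fun _ => 2 * π)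
      ((eventually_ge_atTop 0).mono fun t ht =>
        ((h.integrable_sub_self ht).sub (integrable_const _)).aestronglyMeasurable)
      ((eventually_ge_atTop 0).mono fun t ht =>
        ae_of_all _ fun θ => h.abs_sub_self_sub_le ht θ₀ θ)
      (integrable_const _) ?_
    filter_upwards [hdiff] with θ hθ
    exact ((tendsto_nhds_limUnder hθ).sub_const (θ - θ₀)).congr fun t => by ring
  -- by conservation of the mean displacement, the integral above is `θ₀ - Θ t θ₀`
  refine ⟨θ₀ - ∫ θ, (ℓ θ - (θ - θ₀)) ∂ρ₀, (tendsto_const_nhds.sub hD).congr' ?_⟩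
  filter_upwards [eventually_ge_atTop 0] with t ht
  rw [integral_sub (h.integrable_sub_self ht) (integrable_const _),
    h.integral_sub_self_eq_zero ht, integral_const]
  simp

theorem ae_exists_tendsto (h : IsKuramotoCharacteristics ρ₀ Θ z) {t₀ : ℝ} (ht₀ : 0 ≤ t₀)
    (hz : z t₀ ≠ 0) : ∀ᵐ θ ∂ρ₀, ∃ L, Tendsto (fun t => Θ t θ) atTop (𝓝 L) := by
  obtain ⟨θ₀, hθ₀⟩ := h.ae_tendsto_field_zero.exists
  have hdiff : ∀ᵐ θ ∂ρ₀, ∃ ℓ, Tendsto (fun t => Θ t θ - Θ t θ₀) atTop (𝓝 ℓ) := by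
    filter_upwards [h.ae_tendsto_field_zero] with θ hθ
    exact exists_tendsto_of_tendsto_sin ((h.continuousOn_time θ).sub (h.continuousOn_time θ₀))
      (h.tendsto_sin_sub ht₀ hz hθ hθ₀)
  obtain ⟨c, hc⟩ := h.exists_tendsto_of_ae_tendsto_sub hdiff
  filter_upwards [hdiff] with θ ⟨ℓ, hℓ⟩
  exact ⟨ℓ + c, by simpa using hℓ.add hc⟩

theorem exists_tendsto_orderParameter (h : IsKuramotoCharacteristics ρ₀ Θ z) {t₀ : ℝ}
    (ht₀ : 0 ≤ t₀) (hz : z t₀ ≠ 0) : ∃ w ≠ 0, Tendsto z atTop (𝓝 w) := by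
  set L : ℝ → ℝ := fun θ => limUnder atTop fun t => Θ t θ
  have hlim : Tendsto z atTop (𝓝 (∫ θ, cexp (Complex.I * L θ) ∂ρ₀)) := by
    rw [show z = _ from funext h.orderParameter_eq]
    refine tendsto_integral_filter_of_dominated_convergence (fun _ => 1)
      ((eventually_ge_atTop 0).mono fun t ht => (h.integrable_cexp ht).aestronglyMeasurable)
      (Eventually.of_forall fun t => ae_of_all _ fun θ => (Complex.norm_exp_I_mul_ofReal _).le)
      (integrable_const 1) ?_
    filter_upwards [h.ae_exists_tendsto ht₀ hz] with θ hθ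
    exact ((by fun_prop : Continuous fun x : ℝ => cexp (Complex.I * x)).tendsto _).comp
      (tendsto_nhds_limUnder hθ)
  refine ⟨_, fun hw => hz (norm_le_zero_iff.1 ?_), hlim⟩
  refine ge_of_tendsto (by simpa [hw] using hlim.norm) ?_
  filter_upwards [eventually_ge_atTop t₀] with t ht
  exact h.monotoneOn_norm ht₀ (ht₀.trans ht) ht

end IsKuramotoCharacteristics

/-- For a non-stationary solution of the kinetic Kuramoto model of identical oscillators
in characteristics form: `z(t) ≠ 0` for all `t > 0`, `R(t) = |z(t)|` converges to some
`R* ∈ (0,1]`, and the phase `φ(t)` converges: there is `φ* ∈ ℝ` with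
`z(t)/|z(t)| → e^{iφ*}` as `t → ∞`. -/
theorem kinetic_kuramoto_order_parameters_converge
    (ρ₀ : Measure ℝ) [IsProbabilityMeasure ρ₀]
    (Θ : ℝ → ℝ → ℝ) (z : ℝ → ℂ)
    (hz : ∀ t, z t = ∫ θ, Complex.exp (Complex.I * (Θ t θ : ℂ)) ∂ρ₀)
    (hinit : ∀ θ, Θ 0 θ = θ)
    (hode : ∀ θ : ℝ, ∀ t ≥ (0:ℝ),
      HasDerivAt (fun s => Θ s θ)
        (-(Complex.exp (Complex.I * (Θ t θ : ℂ)) * (starRingEnd ℂ) (z t)).im) t)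
    (hnonstat : ¬ (∀ t ≥ (0:ℝ), Measure.map (Θ t) ρ₀ = ρ₀)) :
    (∀ t > (0:ℝ), z t ≠ 0) ∧
    (∃ Rstar ∈ Set.Ioc (0:ℝ) 1,
      Tendsto (fun t => ‖z t‖) atTop (nhds Rstar)) ∧
    (∃ φstar : ℝ,
      Tendsto (fun t => z t / (‖z t‖ : ℂ)) atTop
        (nhds (Complex.exp (Complex.I * (φstar : ℂ))))) := by
  have h : IsKuramotoCharacteristics ρ₀ Θ z := ⟨hz, hinit, hode⟩
  have hz0 : ∀ t > (0:ℝ), z t ≠ 0 := fun t ht => h.orderParameter_ne_zero hnonstat ht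
  obtain ⟨w, hw, hlim⟩ := h.exists_tendsto_orderParameter zero_le_one (hz0 1 one_pos)
  have hR : Tendsto (fun t => ‖z t‖) atTop (𝓝 ‖w‖) := hlim.norm
  refine ⟨hz0, ⟨‖w‖, ⟨norm_pos_iff.2 hw, le_of_tendsto' hR h.norm_orderParameter_le_one⟩, hR⟩,
    w.arg, ?_⟩
  have hphase : cexp (Complex.I * w.arg) = w / ‖w‖ := by
    rw [eq_div_iff (by simpa using hw), mul_comm, mul_comm Complex.I,
      Complex.norm_mul_exp_arg_mul_I]
  rw [hphase]
  exact hlim.div (Complex.continuous_ofReal.tendsto _ |>.comp hR) (by simpa using hw)
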